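/- Let R be a rational map of degree at least 2 and let Y ⊆ ℂ∞ be a prime closed RO-invariant subset. If x ∈ Y is an isolated point of Y, then every element of RO(x) is isolated in Y and Y equals the closure of RO(x). -/

import Mathlib

open scoped Classical

noncomputable section

/-- The Riemann sphere `ℂ∞`, modelled as the one-point compactification of `ℂ`. -/
abbrev Sphere : Type := OnePoint ℂ

/-- Abstract data of a rational map of degree at least 2 on the Riemann sphere `ℂ∞`,
recorded together with its local valency function `val` and the basic analytic facts:
the map is a continuous open finite-to-one surjection, for every `y` one has
`∑_{x ∈ R⁻¹(y)} val(R,x) = deg R` and the Riemann–Hurwitz identity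
`∑_x (val(R,x) − 1) = 2 deg R − 2`. -/
structure RationalMap where
  toFun : Sphere → Sphere
  deg : ℕ
  two_le_deg : 2 ≤ deg
  /-- `val x` is the local valency (multiplicity) of the map at `x`. -/
  val : Sphere → ℕ
  one_le_val : ∀ x, 1 ≤ val x
  continuous_toFun : Continuous toFun
  isOpenMap_toFun : IsOpenMap toFun
  surjective_toFun : Function.Surjective toFun
  finite_fiber : ∀ y, (toFun ⁻¹' {y}).Finite
  crit_finite : {x | 2 ≤ val x}.Finite
  val_sum : ∀ y, ∑ x ∈ (finite_fiber y).toFinset, val x = deg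
  riemann_hurwitz : ∑ x ∈ crit_finite.toFinset, (val x - 1) = 2 * deg - 2

namespace RationalMap

variable (R : RationalMap)

/-- The set of critical points of `R` (points of valency at least `2`). -/
def Crit : Set Sphere := {x | 2 ≤ R.val x}

/-- The local valency `val(Rⁿ, x)` of the `n`-th iterate of `R` at `x`, computed by the
chain rule for valencies: `val(Rⁿ,x) = ∏_{j<n} val(R, Rʲ(x))`. -/
def valIter (n : ℕ) (x : Sphere) : ℕ :=
  ∏ j ∈ Finset.range n, R.val (R.toFun^[j] x)

/-- The restricted orbit `RO(x)` of a point `x`: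
`RO(x) = { y : Rⁿ(y) = Rᵐ(x) and val(Rⁿ,y) = val(Rᵐ,x) for some n,m ∈ ℕ }`. -/
def RO (x : Sphere) : Set Sphere :=
  {y | ∃ n m : ℕ, R.toFun^[n] y = R.toFun^[m] x ∧ R.valIter n y = R.valIter m x}

/-- A set `Y` is `RO`-invariant when `x ∈ Y` implies `RO(x) ⊆ Y`. -/
def ROInvariant (Y : Set Sphere) : Prop := ∀ x ∈ Y, R.RO x ⊆ Y

/-- The full orbit of `x`. -/
def Orb (x : Sphere) : Set Sphere :=
  {y | ∃ n m : ℕ, R.toFun^[n] x = R.toFun^[m] y}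

/-- `x` is a periodic point of `R`. -/
def Periodic (x : Sphere) : Prop := ∃ p : ℕ, 0 < p ∧ R.toFun^[p] x = x

/-- `x` is pre-periodic: some forward iterate of `x` is periodic. -/
def PrePeriodic (x : Sphere) : Prop := ∃ n : ℕ, R.Periodic (R.toFun^[n] x)

/-- `x` is pre-critical: some forward iterate of `x` (including `x` itself) is critical. -/
def PreCritical (x : Sphere) : Prop := ∃ n : ℕ, R.toFun^[n] x ∈ R.Crit

end RationalMap

/-- `x` is an isolated point of the set `Y`. -/
def IsIsolatedIn (x : Sphere) (Y : Set Sphere) : Prop :=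
  ∃ U : Set Sphere, IsOpen U ∧ U ∩ Y = {x}

/-- A nonempty closed `RO`-invariant set `Y` is prime when `Y ⊆ B ∪ C` for closed
`RO`-invariant sets `B`, `C` implies `Y ⊆ B` or `Y ⊆ C`. -/
def RationalMap.IsPrimeSet (R : RationalMap) (Y : Set Sphere) : Prop :=
  Y.Nonempty ∧ IsClosed Y ∧ R.ROInvariant Y ∧
    ∀ B C : Set Sphere, IsClosed B → IsClosed C → R.ROInvariant B → R.ROInvariant C →
      Y ⊆ B ∪ C → Y ⊆ B ∨ Y ⊆ C

namespace RationalMap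

variable (R : RationalMap)

lemma valIter_add (a n : ℕ) (z : Sphere) :
    R.valIter (a + n) z = R.valIter a z * R.valIter n (R.toFun^[a] z) := by
  unfold valIter
  rw [Finset.prod_range_add]
  congr 1
  refine Finset.prod_congr rfl fun j _ => ?_
  rw [Nat.add_comm a j, Function.iterate_add_apply]

lemma ro_refl (x : Sphere) : x ∈ R.RO x := ⟨0, 0, rfl, rfl⟩

lemma ro_symm {x y : Sphere} (h : y ∈ R.RO x) : x ∈ R.RO y := by
  obtain ⟨n, m, h1, h2⟩ := h
  exact ⟨m, n, h1.symm, h2.symm⟩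

lemma ro_trans {x y z : Sphere} (h1 : z ∈ R.RO y) (h2 : y ∈ R.RO x) : z ∈ R.RO x := by
  obtain ⟨a, b, hab, vab⟩ := h1
  obtain ⟨n, m, hnm, vnm⟩ := h2
  refine ⟨n + a, b + m, ?_, ?_⟩
  · rw [Function.iterate_add_apply, hab, ← Function.iterate_add_apply, Nat.add_comm n b,
      Function.iterate_add_apply, hnm, ← Function.iterate_add_apply]
  · calc R.valIter (n + a) z = R.valIter (a + n) z := by rw [Nat.add_comm]
      _ = R.valIter a z * R.valIter n (R.toFun^[a] z) := R.valIter_add a n z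
      _ = R.valIter b y * R.valIter n (R.toFun^[b] y) := by rw [vab, hab]
      _ = R.valIter (b + n) y := (R.valIter_add b n y).symm
      _ = R.valIter (n + b) y := by rw [Nat.add_comm]
      _ = R.valIter n y * R.valIter b (R.toFun^[n] y) := R.valIter_add n b y
      _ = R.valIter m x * R.valIter b (R.toFun^[m] x) := by rw [vnm, hnm]
      _ = R.valIter (m + b) x := (R.valIter_add m b x).symm
      _ = R.valIter (b + m) x := by rw [Nat.add_comm]

lemma finite_preimage {S : Set Sphere} (hS : S.Finite) : (R.toFun ⁻¹' S).Finite := by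
  rw [← Set.biUnion_preimage_singleton]
  exact Set.Finite.biUnion hS fun y _ => R.finite_fiber y

lemma finite_preimage_iter (n : ℕ) {S : Set Sphere} (hS : S.Finite) :
    (R.toFun^[n] ⁻¹' S).Finite := by
  induction n with
  | zero => simpa using hS
  | succ k ih =>
    rw [Function.iterate_succ, Set.preimage_comp]
    exact R.finite_preimage ih

/-- The set of points `z` where `val(Rⁿ, z) ≠ 1`. -/
def preCritSet (n : ℕ) : Set Sphere := {z | R.valIter n z ≠ 1}

lemma preCritSet_finite (n : ℕ) : (R.preCritSet n).Finite := by
  have hsub : R.preCritSet n ⊆ ⋃ j ∈ Finset.range n, (R.toFun^[j] ⁻¹' R.Crit) := by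
    intro z hz
    by_contra hc
    apply hz
    refine Finset.prod_eq_one fun j hj => ?_
    have h1 := R.one_le_val (R.toFun^[j] z)
    have h2 : ¬ (2 ≤ R.val (R.toFun^[j] z)) := by
      intro h2
      exact hc (Set.mem_biUnion hj h2)
    omega
  exact Set.Finite.subset
    (Set.Finite.biUnion (Finset.range n).finite_toSet fun j _ =>
      R.finite_preimage_iter j R.crit_finite) hsub

lemma valIter_eq_one {n : ℕ} {z : Sphere} (h : z ∉ R.preCritSet n) : R.valIter n z = 1 :=
  not_not.mp h

lemma isOpenMap_iter (n : ℕ) : IsOpenMap (R.toFun^[n]) := by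
  induction n with
  | zero => exact IsOpenMap.id
  | succ k ih =>
    rw [Function.iterate_succ]
    exact ih.comp R.isOpenMap_toFun

/-- Transfer of isolatedness along the grand orbit inside an `RO`-invariant set. -/
lemma isolated_transfer {Y : Set Sphere} (hInv : R.ROInvariant Y) {p q : Sphere} {m n : ℕ}
    (hq : q ∈ Y) (h : R.toFun^[m] p = R.toFun^[n] q) (hiso : IsIsolatedIn p Y) :
    IsIsolatedIn q Y := by
  obtain ⟨U, hUo, hU⟩ := hiso
  have hpU : p ∈ U := by
    have hpm : p ∈ U ∩ Y := by rw [hU]; rfl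
    exact hpm.1
  set U' : Set Sphere := U \ (R.preCritSet m \ {p}) with hU'def
  have hU'o : IsOpen U' :=
    hUo.sdiff (Set.Finite.isClosed (Set.Finite.diff (R.preCritSet_finite m)))
  have hpU' : p ∈ U' := ⟨hpU, fun hc => hc.2 rfl⟩
  set V : Set Sphere :=
    (R.toFun^[n] ⁻¹' (R.toFun^[m] '' U')) \
      ((R.preCritSet n ∪ R.toFun^[n] ⁻¹' {R.toFun^[m] p}) \ {q}) with hVdef
  have hVo : IsOpen V := by
    refine IsOpen.sdiff ((R.continuous_toFun.iterate n).isOpen_preimage _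
      (R.isOpenMap_iter m U' hU'o)) (Set.Finite.isClosed (Set.Finite.diff ?_))
    exact Set.Finite.union (R.preCritSet_finite n)
      (R.finite_preimage_iter n (Set.finite_singleton _))
  have hqV : q ∈ V := by
    refine ⟨?_, fun hc => hc.2 rfl⟩
    rw [Set.mem_preimage, ← h]
    exact ⟨p, hpU', rfl⟩
  refine ⟨V, hVo, ?_⟩
  apply Set.eq_singleton_iff_unique_mem.mpr
  refine ⟨⟨hqV, hq⟩, ?_⟩
  rintro z ⟨hzV, hzY⟩
  by_contra hzq
  have hzrem := hzV.2
  have hzP : z ∉ R.preCritSet n := fun hc => hzrem ⟨Or.inl hc, hzq⟩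
  have hzfib : R.toFun^[n] z ≠ R.toFun^[m] p := fun hc => hzrem ⟨Or.inr hc, hzq⟩
  obtain ⟨u, huU', hu⟩ := hzV.1
  have hup : u ≠ p := fun hc => hzfib (by rw [← hu, hc])
  have huP : u ∉ R.preCritSet m := fun hc => huU'.2 ⟨hc, hup⟩
  have huRO : u ∈ R.RO z :=
    ⟨m, n, hu, by rw [R.valIter_eq_one huP, R.valIter_eq_one hzP]⟩
  have huY : u ∈ Y := hInv z hzY huRO
  have : u ∈ U ∩ Y := ⟨huU'.1, huY⟩
  rw [hU] at this
  exact hup this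

end RationalMap

/-- If `Y` is a prime (closed, `RO`-invariant) subset of the sphere and
`x ∈ Y` is an isolated point of `Y`, then every element of `RO(x)` is isolated in `Y`
and `Y` is the closure of `RO(x)`. -/
theorem stmt_15 (R : RationalMap) (Y : Set Sphere) (hY : R.IsPrimeSet Y)
    (x : Sphere) (hxY : x ∈ Y) (hxiso : IsIsolatedIn x Y) :
    (∀ y ∈ R.RO x, IsIsolatedIn y Y) ∧ Y = closure (R.RO x) := by
  obtain ⟨hne, hclosed, hinv, hprime⟩ := hY
  have hROsub : R.RO x ⊆ Y := hinv x hxY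
  have part1 : ∀ y ∈ R.RO x, IsIsolatedIn y Y := by
    intro y hy
    have hyY : y ∈ Y := hROsub hy
    obtain ⟨n, m, hnm, -⟩ := hy
    exact R.isolated_transfer hinv hyY hnm.symm hxiso
  refine ⟨part1, ?_⟩
  have hBY : closure (R.RO x) ⊆ Y := closure_minimal hROsub hclosed
  -- C := Y \ RO x is closed
  have hCclosed : IsClosed (Y \ R.RO x) := by
    apply isClosed_of_closure_subset
    intro p hp
    have hpY : p ∈ Y := by
      have := closure_mono (Set.diff_subset : Y \ R.RO x ⊆ Y) hp
      rwa [hclosed.closure_eq] at this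
    refine ⟨hpY, fun hpRO => ?_⟩
    obtain ⟨U, hUo, hU⟩ := part1 p hpRO
    have hpU : p ∈ U := by
      have hpm : p ∈ U ∩ Y := by rw [hU]; rfl
      exact hpm.1
    obtain ⟨a, haU, haY, haRO⟩ := mem_closure_iff.mp hp U hUo hpU
    have hap : a = p := by
      have : a ∈ U ∩ Y := ⟨haU, haY⟩
      rwa [hU] at this
    exact haRO (hap ▸ hpRO)
  -- C is RO-invariant
  have hCinv : R.ROInvariant (Y \ R.RO x) := by
    rintro y ⟨hyY, hyRO⟩ z hz
    exact ⟨hinv y hyY hz, fun hzRO => hyRO (R.ro_trans (R.ro_symm hz) hzRO)⟩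
  -- B := closure (RO x) is RO-invariant
  have hBinv : R.ROInvariant (closure (R.RO x)) := by
    intro y hyB z hz
    by_cases hyRO : y ∈ R.RO x
    · exact subset_closure (R.ro_trans hz hyRO)
    · have hyY : y ∈ Y := hBY hyB
      have hzY : z ∈ Y := hinv y hyY hz
      obtain ⟨n, m, hnm, -⟩ := hz
      have hyNiso : ¬ IsIsolatedIn y Y := by
        rintro ⟨U, hUo, hU⟩
        have hyU : y ∈ U := by
          have hym : y ∈ U ∩ Y := by rw [hU]; rfl
          exact hym.1
        obtain ⟨a, haU, haRO⟩ := mem_closure_iff.mp hyB U hUo hyU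
        have hay : a = y := by
          have : a ∈ U ∩ Y := ⟨haU, hROsub haRO⟩
          rwa [hU] at this
        exact hyRO (hay ▸ haRO)
      have hzNiso : ¬ IsIsolatedIn z Y := fun hziso =>
        hyNiso (R.isolated_transfer hinv hyY hnm hziso)
      rw [mem_closure_iff]
      intro W hWo hzW
      set W' : Set Sphere := W \ (R.preCritSet n \ {z}) with hW'def
      have hW'o : IsOpen W' :=
        hWo.sdiff (Set.Finite.isClosed (Set.Finite.diff (R.preCritSet_finite n)))
      have hzW' : z ∈ W' := ⟨hzW, fun hc => hc.2 rfl⟩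
      have hTo : IsOpen (R.toFun^[n] '' W') := R.isOpenMap_iter n W' hW'o
      set V : Set Sphere :=
        (R.toFun^[m] ⁻¹' (R.toFun^[n] '' W')) \ (R.preCritSet m \ {y}) with hVdef
      have hVo : IsOpen V :=
        IsOpen.sdiff ((R.continuous_toFun.iterate m).isOpen_preimage _ hTo)
          (Set.Finite.isClosed (Set.Finite.diff (R.preCritSet_finite m)))
      have hyV : y ∈ V := by
        refine ⟨?_, fun hc => hc.2 rfl⟩
        rw [Set.mem_preimage, ← hnm]
        exact ⟨z, hzW', rfl⟩
      obtain ⟨a, haV, haRO⟩ := mem_closure_iff.mp hyB V hVo hyV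
      have hay : a ≠ y := fun hc => hyRO (hc ▸ haRO)
      have haP : a ∉ R.preCritSet m := fun hc => haV.2 ⟨hc, hay⟩
      obtain ⟨b, hbW', hb⟩ := haV.1
      by_cases hbz : b = z
      · exfalso
        apply hzNiso
        refine R.isolated_transfer hinv hzY (m := m) (n := n) ?_ (part1 a haRO)
        rw [← hb, hbz]
      · have hbP : b ∉ R.preCritSet n := fun hc => hbW'.2 ⟨hc, hbz⟩
        have hbROa : b ∈ R.RO a :=
          ⟨n, m, hb, by rw [R.valIter_eq_one hbP, R.valIter_eq_one haP]⟩
        exact ⟨b, hbW'.1, R.ro_trans hbROa haRO⟩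
  have hcover : Y ⊆ closure (R.RO x) ∪ (Y \ R.RO x) := by
    intro p hp
    by_cases h : p ∈ R.RO x
    · exact Or.inl (subset_closure h)
    · exact Or.inr ⟨hp, h⟩
  rcases hprime (closure (R.RO x)) (Y \ R.RO x) isClosed_closure hCclosed hBinv hCinv
    hcover with h | h
  · exact Set.Subset.antisymm h hBY
  · exact absurd (R.ro_refl x) (h hxY).2
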